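/- arXiv:2111.13145 — 9 statements merged into one kernel-verified Lean document; each statement's English description precedes it below -/
import Mathlib

section
/- In the smart voting model, every consistent certificate determines a unique outcome: if a certificate c for a profile B of valid smart ballots is consistent via an enumeration σ and also via an enumeration σ', then the total assignments in D^N produced by the iterative vote-determination process along σ and along σ' are equal. -/
/-!
Consistency along `σ` says more than that each delegated vote is the value of its delegation
function at the outcome: that value is already forced by the votes of the σ-predecessors. So if
`X'` is any self-consistent assignment and agrees with `X` before `a` in `σ`, evaluating the
certified delegation of `a` at `X'` gives `X a` on one side and `X' a` on the other. Induction
along `σ` gives `X = X'`, and every consistent outcome, whatever its enumeration, is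
self-consistent.
-/

namespace SmartVoting

/-- A smart ballot for agent `a`: levels `1, …, k-1` are delegations `(S h, F h)`
(with `a ∉ S h` and `F h` depending only on the votes of the members of `S h`),
and level `k` is the backup direct vote. -/
structure SmartBallot (N D : Type*) (a : N) where
  k : ℕ
  k_pos : 1 ≤ k
  S : ℕ → Finset N
  F : ℕ → (N → D) → D
  vote : D
  no_self : ∀ h, 1 ≤ h → h < k → a ∉ S h
  local_dep : ∀ h, 1 ≤ h → h < k →
    ∀ Y Y' : N → D, (∀ s ∈ S h, Y s = Y' s) → F h Y = F h Y'

variable {N D : Type*} [Fintype N] [DecidableEq N]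

/-- `c` is a certificate for the profile `B`. -/
def IsCertificate (B : ∀ a : N, SmartBallot N D a) (c : N → ℕ) : Prop :=
  ∀ a, 1 ≤ c a ∧ c a ≤ (B a).k

/-- `c` is consistent via the enumeration `σ`, producing the total outcome `X`:
in the iterative process along `σ`, each agent `a` gets its direct vote if
`c a = k_a`, and otherwise the necessary winner of its level-`c a` delegation at
the partial assignment built so far (the restriction of `X` to the σ-predecessors
of `a`), which is required to exist. -/
def ConsistentVia (B : ∀ a : N, SmartBallot N D a) (c : N → ℕ)
    (σ : Fin (Fintype.card N) ≃ N) (X : N → D) : Prop :=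
  ∀ a : N,
    (c a = (B a).k → X a = (B a).vote) ∧
    (c a < (B a).k →
      ∀ Y : N → D, (∀ b : N, σ.symm b < σ.symm a → Y b = X b) →
        (B a).F (c a) Y = X a)

end SmartVoting

namespace SmartVoting

variable {N D : Type*} [Fintype N]

def IsSelfConsistent (B : ∀ a : N, SmartBallot N D a) (c : N → ℕ) (X : N → D) : Prop :=
  ∀ a : N,
    (c a = (B a).k → X a = (B a).vote) ∧
    (c a < (B a).k → (B a).F (c a) X = X a)

section

variable {B : ∀ a : N, SmartBallot N D a} {c : N → ℕ} {σ : Fin (Fintype.card N) ≃ N}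
  {X : N → D}

theorem ConsistentVia.isSelfConsistent (h : ConsistentVia B c σ X) : IsSelfConsistent B c X :=
  fun a => ⟨(h a).1, fun ha => (h a).2 ha X fun _ _ => rfl⟩

theorem ConsistentVia.eq_of_isSelfConsistent (hc : IsCertificate B c) (h : ConsistentVia B c σ X)
    {X' : N → D} (h' : IsSelfConsistent B c X') : X = X' := by
  funext a
  obtain ⟨i, rfl⟩ := σ.surjective a
  induction i using WellFoundedLT.induction with
  | _ i ih =>
    rcases (hc (σ i)).2.lt_or_eq with hlt | heq
    · have hpred : ∀ b, σ.symm b < σ.symm (σ i) → X' b = X b := fun b hb => by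
        rw [σ.symm_apply_apply] at hb
        simpa using (ih _ hb).symm
      rw [← (h (σ i)).2 hlt X' hpred, (h' (σ i)).2 hlt]
    · rw [(h (σ i)).1 heq, (h' (σ i)).1 heq]

end

variable [DecidableEq N]

/-- Every consistent certificate determines a unique outcome: if `c` is consistent
via `σ` with outcome `X` and via `σ'` with outcome `X'`, then `X = X'`. -/
theorem consistent_certificate_unique_outcome
    (B : ∀ a : N, SmartBallot N D a) (c : N → ℕ) (hc : IsCertificate B c)
    (σ σ' : Fin (Fintype.card N) ≃ N) (X X' : N → D)
    (h : ConsistentVia B c σ X) (h' : ConsistentVia B c σ' X') :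
    X = X' :=
  h.eq_of_isSelfConsistent hc h'.isSelfConsistent

end SmartVoting
end

section
/- Let φ : (V → Bool) → Bool be a contingent Boolean function over a finite type V of variables, and let ρ : V → Option Bool be a partial assignment. Then φ(Y) = true for every total assignment Y extending ρ if and only if some prime implicant of φ is made true by ρ (i.e., every literal of at least one prime implicant cube is true under ρ). -/
namespace BoolFun

variable {V : Type*} [Fintype V]

/-- A total assignment `Y` extends (equivalently, satisfies) a partial
assignment / cube `ρ` if it agrees with `ρ` wherever `ρ` is defined. -/
def Extends (ρ : V → Option Bool) (Y : V → Bool) : Prop :=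
  ∀ v b, ρ v = some b → Y v = b

/-- A cube `C` is an implicant of `φ` if `φ` is true on every total assignment
satisfying `C`. -/
def Implicant (φ : (V → Bool) → Bool) (C : V → Option Bool) : Prop :=
  ∀ Y : V → Bool, Extends C Y → φ Y = true

/-- `C' ⊑ C`: at every variable, `C'` is undefined or agrees with `C`. -/
def CubeLE (C' C : V → Option Bool) : Prop :=
  ∀ v, C' v = none ∨ C' v = C v

/-- A prime implicant: an implicant none of whose proper sub-cubes is an implicant. -/
def PrimeImplicant (φ : (V → Bool) → Bool) (C : V → Option Bool) : Prop :=
  Implicant φ C ∧ ∀ C', CubeLE C' C → C' ≠ C → ¬ Implicant φ C'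

/-- `ρ` makes the cube `C` true: `ρ` agrees with `C` on every variable where `C`
is defined (every literal of `C` is true under `ρ`). -/
def MadeTrue (ρ C : V → Option Bool) : Prop :=
  ∀ v b, C v = some b → ρ v = some b

/-- `φ` is contingent: neither constantly true nor constantly false. -/
def Contingent (φ : (V → Bool) → Bool) : Prop :=
  (∃ Y, φ Y = true) ∧ (∃ Y, φ Y = false)

end BoolFun

namespace BoolFun

variable {V : Type*}

namespace CubeLE

variable {C C' C'' : V → Option Bool}

theorem refl (C : V → Option Bool) : CubeLE C C :=
  fun _ => Or.inr rfl

theorem trans (h₁ : CubeLE C'' C') (h₂ : CubeLE C' C) : CubeLE C'' C := fun v =>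
  (h₁ v).elim Or.inl fun h => (h₂ v).elim (fun h' => Or.inl (h.trans h')) fun h' => Or.inr (h.trans h')

theorem madeTrue {ρ : V → Option Bool} (h : CubeLE C ρ) : MadeTrue ρ C := fun v b hv =>
  (h v).elim (fun h' => by simp [h'] at hv) fun h' => h' ▸ hv

end CubeLE

theorem Extends.of_madeTrue {ρ C : V → Option Bool} {Y : V → Bool} (hY : Extends ρ Y)
    (hC : MadeTrue ρ C) : Extends C Y :=
  fun v b hv => hY v b (hC v b hv)

variable [Fintype V]

def domain (C : V → Option Bool) : Finset V :=
  Finset.univ.filter fun v => (C v).isSome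

namespace CubeLE

variable {C C' : V → Option Bool}

theorem domain_subset (h : CubeLE C' C) : domain C' ⊆ domain C := by
  intro v hv
  simp only [domain, Finset.mem_filter, Finset.mem_univ, true_and] at hv ⊢
  rcases h v with h' | h' <;> simp_all

theorem eq_of_domain_subset (h : CubeLE C' C) (hdom : domain C ⊆ domain C') : C' = C := by
  funext v
  rcases h v with h' | h'
  · by_cases hv : (C v).isSome
    · have := hdom (by simpa [domain] using hv)
      simp [domain, h'] at this
    · rw [h', Option.not_isSome_iff_eq_none.mp hv]
  · exact h'

theorem card_domain_lt (h : CubeLE C' C) (hne : C' ≠ C) :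
    (domain C').card < (domain C).card :=
  Finset.card_lt_card ⟨h.domain_subset, fun hdom => hne (h.eq_of_domain_subset hdom)⟩

end CubeLE

theorem Implicant.exists_primeImplicant_cubeLE {φ : (V → Bool) → Bool} {C : V → Option Bool}
    (hC : Implicant φ C) : ∃ C', PrimeImplicant φ C' ∧ CubeLE C' C := by
  induction hn : (domain C).card using Nat.strong_induction_on generalizing C with
  | _ n ih =>
    by_cases hprime : PrimeImplicant φ C
    · exact ⟨C, hprime, CubeLE.refl C⟩
    obtain ⟨C'', hle, hne, hC''⟩ : ∃ C'', CubeLE C'' C ∧ C'' ≠ C ∧ Implicant φ C'' := by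
      by_contra! h
      exact hprime ⟨hC, h⟩
    obtain ⟨C', hprime', hle'⟩ := ih _ (hn ▸ hle.card_domain_lt hne) hC'' rfl
    exact ⟨C', hprime', hle'.trans hle⟩

theorem necessarily_true_iff_some_prime_implicant_made_true_general
    (φ : (V → Bool) → Bool) (ρ : V → Option Bool) :
    (∀ Y : V → Bool, Extends ρ Y → φ Y = true) ↔
      ∃ C, PrimeImplicant φ C ∧ MadeTrue ρ C := by
  constructor
  · intro hρ
    obtain ⟨C, hprime, hle⟩ := Implicant.exists_primeImplicant_cubeLE (φ := φ) hρ
    exact ⟨C, hprime, hle.madeTrue⟩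
  · rintro ⟨C, ⟨hC, -⟩, hmade⟩ Y hY
    exact hC Y (hY.of_madeTrue hmade)

/-- A contingent Boolean function is necessarily true at a partial assignment `ρ`
iff some prime implicant of `φ` is made true by `ρ`. -/
theorem necessarily_true_iff_some_prime_implicant_made_true
    (φ : (V → Bool) → Bool) (hφ : Contingent φ) (ρ : V → Option Bool) :
    (∀ Y : V → Bool, Extends ρ Y → φ Y = true) ↔
      ∃ C, PrimeImplicant φ C ∧ MadeTrue ρ C :=
  necessarily_true_iff_some_prime_implicant_made_true_general φ ρ

end BoolFun
end

section
/- Let φ : (V → Bool) → Bool be a contingent Boolean function over a finite type V of variables, and let ρ : V → Option Bool be a partial assignment. Then φ(Y) = false for every total assignment Y extending ρ if and only if every prime implicant of φ is made false by ρ (i.e., each prime implicant cube contains at least one literal falsified by ρ). -/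
namespace BoolFun

variable {V : Type*} [Fintype V]

/-- `ρ` makes the cube `C` false: some literal of `C` is falsified by `ρ`. -/
def MadeFalse (ρ C : V → Option Bool) : Prop :=
  ∃ v b, C v = some b ∧ ρ v = some (!b)

private lemma exists_prime_below (φ : (V → Bool) → Bool) :
    ∀ n (C : V → Option Bool),
      (Finset.univ.filter fun v => (C v).isSome).card = n →
      Implicant φ C → ∃ P, PrimeImplicant φ P ∧ CubeLE P C := by
  intro n
  induction n using Nat.strong_induction_on with
  | _ n ih =>
    intro C hcard hC
    by_cases hP : ∀ C', CubeLE C' C → C' ≠ C → ¬ Implicant φ C'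
    · exact ⟨C, ⟨hC, hP⟩, fun v => Or.inr rfl⟩
    · push_neg at hP
      obtain ⟨C', hle, hne, hC'⟩ := hP
      have hsub : (Finset.univ.filter fun v => (C' v).isSome) ⊂
          (Finset.univ.filter fun v => (C v).isSome) := by
        constructor
        · intro v hv
          simp only [Finset.mem_filter, Finset.mem_univ, true_and] at hv ⊢
          rcases hle v with h | h
          · simp [h] at hv
          · rw [← h]; exact hv
        · intro hcontra
          apply hne
          funext v
          rcases hle v with h | h
          · by_contra hne'
            have hv : (C v).isSome := by
              cases hCv : C v
              · exact absurd (h.trans hCv.symm) hne'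
              · simp [hCv]
            have := hcontra (Finset.mem_filter.mpr ⟨Finset.mem_univ v, hv⟩)
            simp only [Finset.mem_filter, Finset.mem_univ, true_and] at this
            simp [h] at this
          · exact h
      have hlt : (Finset.univ.filter fun v => (C' v).isSome).card < n :=
        hcard ▸ Finset.card_lt_card hsub
      obtain ⟨P, hP, hPle⟩ := ih _ hlt C' rfl hC'
      exact ⟨P, hP, fun v => by
        rcases hPle v with h | h
        · exact Or.inl h
        · rcases hle v with h' | h'
          · exact Or.inl (h.trans h')
          · exact Or.inr (h.trans h')⟩

/-- A contingent Boolean function is necessarily false at a partial assignment `ρ`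
iff every prime implicant of `φ` is made false by `ρ`. -/
theorem necessarily_false_iff_all_prime_implicants_made_false
    (φ : (V → Bool) → Bool) (hφ : Contingent φ) (ρ : V → Option Bool) :
    (∀ Y : V → Bool, Extends ρ Y → φ Y = false) ↔
      ∀ C, PrimeImplicant φ C → MadeFalse ρ C := by
  constructor
  · intro h C hC
    by_contra hmf
    -- build a common extension of C and ρ
    set Y : V → Bool := fun v => (C v).getD ((ρ v).getD false) with hY
    have hYC : Extends C Y := by
      intro v b hb; simp [hY, hb]
    have hYρ : Extends ρ Y := by
      intro v b hb
      cases hCv : C v with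
      | none => simp [hY, hCv, hb]
      | some b' =>
        have : b' = b := by
          by_contra hbb
          exact hmf ⟨v, b', hCv, by
            rw [hb]
            cases b <;> cases b' <;> simp_all⟩
        simp [hY, hCv, this]
    have h1 := hC.1 Y hYC
    have h2 := h Y hYρ
    simp [h1] at h2
  · intro h Y hYρ
    by_contra hfalse
    have hYtrue : φ Y = true := by
      cases hft : φ Y
      · exact absurd hft hfalse
      · rfl
    have hImp : Implicant φ (fun v => some (Y v)) := by
      intro Z hZ
      have : Z = Y := funext fun v => hZ v (Y v) rfl
      rw [this]; exact hYtrue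
    obtain ⟨P, hP, hPle⟩ := exists_prime_below φ _ (fun v => some (Y v)) rfl hImp
    obtain ⟨v, b, hPv, hρv⟩ := h P hP
    rcases hPle v with h' | h'
    · rw [hPv] at h'; exact absurd h' (by simp)
    · rw [hPv] at h'
      have hb : b = Y v := Option.some.inj h'.symm |>.symm
      have := hYρ v (!b) hρv
      rw [hb] at this
      exact absurd this (by cases Y v <;> simp)

end BoolFun
end

section
/- Let G = (V, E) be a finite directed irreflexive graph and let B_G be the associated smart profile over D = {0,1}. Then G contains no directed cycle if and only if the all-ones certificate c, with c_v = 1 for every vertex-agent v, is consistent for B_G. -/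
namespace SmartVoting

variable {N D : Type*} [Fintype N] [DecidableEq N]

/-- `c` is a consistent certificate for `B`. -/
def Consistent (B : ∀ a : N, SmartBallot N D a) (c : N → ℕ) : Prop :=
  ∃ σ X, ConsistentVia B c σ X

variable {V : Type*} [Fintype V] [DecidableEq V]

/-- The out-neighbourhood of a vertex `v` in the directed graph `E`. -/
def outNbrs (E : V → V → Prop) [DecidableRel E] (v : V) : Finset V :=
  Finset.univ.filter (fun u => E v u)

/-- The smart profile associated to a directed irreflexive graph: a vertex with
nonempty out-neighbourhood `O_v` delegates to the conjunction (AND) of the votes of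
`O_v` and has backup vote `1` (here `true`); a vertex without outgoing edges votes
directly for `1`. -/
def graphProfile (E : V → V → Prop) [DecidableRel E] (hirr : ∀ v, ¬ E v v)
    (v : V) : SmartBallot V Bool v :=
  if h : (outNbrs E v).Nonempty then
    { k := 2
      k_pos := one_le_two
      S := fun _ => outNbrs E v
      F := fun _ z => decide (∀ u ∈ outNbrs E v, z u = true)
      vote := true
      no_self := by
        intro h' _ _ hv
        exact hirr v (by simpa [outNbrs] using hv)
      local_dep := by
        intro h' _ _ Y Y' hYY'
        rw [decide_eq_decide]
        constructor
        · intro H u hu; rw [← hYY' u hu]; exact H u hu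
        · intro H u hu; rw [hYY' u hu]; exact H u hu }
  else
    { k := 1
      k_pos := le_refl 1
      S := fun _ => ∅
      F := fun _ _ => true
      vote := true
      no_self := by
        intro h' h1 h2
        exact absurd (lt_of_le_of_lt h1 h2) (lt_irrefl 1)
      local_dep := by
        intro h' h1 h2
        exact absurd (lt_of_le_of_lt h1 h2) (lt_irrefl 1) }

/-- A finite directed irreflexive graph has no directed cycle iff the all-ones
certificate is consistent for the associated smart profile. -/
theorem acyclic_iff_allOnes_consistent
    (E : V → V → Prop) [DecidableRel E] (hirr : ∀ v, ¬ E v v) :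
    (∀ v, ¬ Relation.TransGen E v v) ↔
      Consistent (graphProfile E hirr) (fun _ => 1) := by
  classical
  constructor
  · intro hac
    -- build a topological ordering via a rank function
    set f : V → ℕ := fun v => {w | Relation.TransGen E v w}.ncard with hf
    have hfmono : ∀ v u, E v u → f u < f v := by
      intro v u h
      have hsub : {w | Relation.TransGen E u w} ⊆ {w | Relation.TransGen E v w} :=
        fun w hw => Relation.TransGen.head h hw
      have hne : u ∈ {w | Relation.TransGen E v w} := Relation.TransGen.single h
      have hnu : u ∉ {w | Relation.TransGen E u w} := hac u
      exact Set.ncard_lt_ncard ⟨hsub, fun hle => hnu (hle hne)⟩ (Set.toFinite _)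
    set n := Fintype.card V with hn
    obtain ⟨e0⟩ : Nonempty (V ≃ Fin n) := ⟨Fintype.equivFin V⟩
    set key : V → ℕ := fun v => f v * (n + 1) + (e0 v : ℕ) with hkey
    have keyinj : Function.Injective key := by
      intro a b hab
      have ha : (e0 a : ℕ) < n + 1 := Nat.lt_succ_of_lt (e0 a).isLt
      have hb : (e0 b : ℕ) < n + 1 := Nat.lt_succ_of_lt (e0 b).isLt
      have h1 : f a = f b := by
        by_contra hne
        rcases Nat.lt_or_ge (f a) (f b) with h | h
        · have : key a < key b := by
            calc key a < f a * (n+1) + (n+1) := by simp [hkey]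
              _ = (f a + 1) * (n+1) := by ring
              _ ≤ f b * (n+1) := Nat.mul_le_mul_right _ h
              _ ≤ key b := Nat.le_add_right _ _
          omega
        · have h' : f b < f a := lt_of_le_of_ne h (fun hh => hne hh.symm)
          have : key b < key a := by
            calc key b < f b * (n+1) + (n+1) := by simp [hkey]
              _ = (f b + 1) * (n+1) := by ring
              _ ≤ f a * (n+1) := Nat.mul_le_mul_right _ h'
              _ ≤ key a := Nat.le_add_right _ _
          omega
      have h2 : (e0 a : ℕ) = (e0 b : ℕ) := by
        simp only [hkey, h1] at hab; omega
      exact e0.injective (Fin.ext h2)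
    have keymono : ∀ v u, E v u → key u < key v := by
      intro v u h
      have := hfmono v u h
      calc key u < f u * (n+1) + (n+1) := by simp [hkey]
        _ = (f u + 1) * (n+1) := by ring
        _ ≤ f v * (n+1) := Nat.mul_le_mul_right _ this
        _ ≤ key v := Nat.le_add_right _ _
    letI : LinearOrder V := LinearOrder.lift' key keyinj
    have hlt : ∀ u v : V, u < v ↔ key u < key v := fun _ _ => Iff.rfl
    let σo : Fin (Fintype.card V) ≃o V := monoEquivOfFin V rfl
    refine ⟨σo.toEquiv, fun _ => true, fun a => ⟨?_, ?_⟩⟩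
    · intro _
      by_cases h : (outNbrs E a).Nonempty <;> simp [graphProfile, h]
    · intro hk Y hY
      by_cases h : (outNbrs E a).Nonempty
      · simp only [graphProfile, h, dif_pos] at *
        rw [decide_eq_true_eq]
        intro u hu
        apply hY
        have hEu : E a u := by simpa [outNbrs] using hu
        have : u < a := (hlt u a).2 (keymono a u hEu)
        have h1 : σo.symm u < σo.symm a := σo.symm.strictMono this
        exact h1
      · simp [graphProfile, h] at hk
  · rintro ⟨σ, X, hcv⟩ v hcyc
    -- main claim: every vertex votes true and all its out-neighbours come earlier
    have main : ∀ n : ℕ, ∀ v : V, (σ.symm v : ℕ) = n →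
        X v = true ∧ ∀ u, E v u → (σ.symm u : ℕ) < (σ.symm v : ℕ) := by
      intro n
      induction n using Nat.strong_induction_on with
      | _ n IH =>
        intro v hv
        by_cases hne : (outNbrs E v).Nonempty
        · have hk : (1 : ℕ) < (graphProfile E hirr v).k := by
            simp [graphProfile, hne]
          have h2 := (hcv v).2 hk
          have hF : ∀ Y : V → Bool, (∀ b, σ.symm b < σ.symm v → Y b = X b) →
              decide (∀ u ∈ outNbrs E v, Y u = true) = X v := by
            intro Y hY
            have := h2 Y hY
            simpa [graphProfile, hne] using this
          have hearlier : ∀ u, E v u → (σ.symm u : ℕ) < (σ.symm v : ℕ) := by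
            intro u hEu
            by_contra hnl
            have huO : u ∈ outNbrs E v := by simpa [outNbrs] using hEu
            set Y1 : V → Bool := fun b =>
              if (σ.symm b : ℕ) < (σ.symm v : ℕ) then X b else true with hY1
            set Y2 : V → Bool := fun b => if b = u then false else Y1 b with hY2
            have hagree1 : ∀ b, σ.symm b < σ.symm v → Y1 b = X b := by
              intro b hb
              simp only [hY1, if_pos (Fin.lt_iff_val_lt_val.1 hb)]
            have hagree2 : ∀ b, σ.symm b < σ.symm v → Y2 b = X b := by
              intro b hb
              have hbne : b ≠ u := by
                rintro rfl
                exact hnl (Fin.lt_iff_val_lt_val.1 hb)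
              simp [hY2, hbne]
              exact hagree1 b hb
            have e1 := hF Y1 hagree1
            have e2 := hF Y2 hagree2
            have hd1 : decide (∀ u ∈ outNbrs E v, Y1 u = true) = true := by
              rw [decide_eq_true_eq]
              intro w hw
              by_cases hwlt : (σ.symm w : ℕ) < (σ.symm v : ℕ)
              · have := (IH _ (hv ▸ hwlt) w rfl).1
                simp only [hY1, if_pos hwlt, this]
              · simp only [hY1, if_neg hwlt]
            have hd2 : decide (∀ u ∈ outNbrs E v, Y2 u = true) = false := by
              rw [decide_eq_false_iff_not]
              intro H
              have := H u huO
              simp [hY2] at this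
            rw [e1] at hd1
            rw [e2] at hd2
            rw [hd1] at hd2
            exact absurd hd2 (by decide)
          refine ⟨?_, hearlier⟩
          have := hF X (fun b _ => rfl)
          rw [← this, decide_eq_true_eq]
          intro w hw
          have hEw : E v w := by simpa [outNbrs] using hw
          have hwlt := hearlier w hEw
          exact (IH _ (hv ▸ hwlt) w rfl).1
        · constructor
          · have hk : (fun (_ : V) => (1:ℕ)) v = (graphProfile E hirr v).k := by
              simp [graphProfile, hne]
            have := (hcv v).1 hk
            simpa [graphProfile, hne] using this
          · intro u hEu
            exact absurd ⟨u, by simpa [outNbrs] using hEu⟩ hne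
    have hdesc : ∀ a b : V, Relation.TransGen E a b → (σ.symm b : ℕ) < (σ.symm a : ℕ) := by
      intro a b h
      induction h with
      | single h => exact (main _ _ rfl).2 _ h
      | tail _ h ih => exact lt_trans ((main _ _ rfl).2 _ h) ih
    exact absurd (hdesc v v hcyc) (lt_irrefl _)

end SmartVoting
end

section
/- Let G = (V, E) be a finite directed irreflexive graph, k ∈ ℕ, and let B_G be the associated smart profile over D = {0,1}. Then G has a feedback vertex set of size at most k (a set X ⊆ V with |X| ≤ k such that the subgraph of G induced on V \ X has no directed cycle) if and only if B_G has a consistent certificate c with rank(c) = Σ_v c_v ≤ |V| + k. -/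
namespace SmartVoting

variable {N D : Type*} [Fintype N] [DecidableEq N]

variable {V : Type*} [Fintype V] [DecidableEq V]

section helpers

variable (E : V → V → Prop) [DecidableRel E] (hirr : ∀ v, ¬ E v v)

lemma gp_vote (v : V) : (graphProfile E hirr v).vote = true := by
  unfold graphProfile; split <;> rfl

lemma gp_k_of_nonempty {v : V} (hv : (outNbrs E v).Nonempty) :
    (graphProfile E hirr v).k = 2 := by
  unfold graphProfile; rw [dif_pos hv]

lemma gp_F_of_nonempty {v : V} (hv : (outNbrs E v).Nonempty) (h : ℕ) (z : V → Bool) :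
    (graphProfile E hirr v).F h z = decide (∀ u ∈ outNbrs E v, z u = true) := by
  unfold graphProfile; rw [dif_pos hv]

lemma gp_nonempty_of_lt {v : V} {m : ℕ} (hm : 1 ≤ m)
    (h : m < (graphProfile E hirr v).k) : (outNbrs E v).Nonempty := by
  unfold graphProfile at h
  split at h
  · assumption
  · simp at h; omega

end helpers

/-- A finite directed irreflexive graph has a feedback vertex set of size at most
`k` iff the associated smart profile has a consistent certificate of rank at most
`|V| + k`. -/
theorem fvs_iff_consistent_certificate_of_bounded_rank
    (E : V → V → Prop) [DecidableRel E] (hirr : ∀ v, ¬ E v v) (k : ℕ) :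
    (∃ X : Finset V, X.card ≤ k ∧
        ∀ v, ¬ Relation.TransGen (fun u w => E u w ∧ u ∉ X ∧ w ∉ X) v v) ↔
      (∃ c : V → ℕ, IsCertificate (graphProfile E hirr) c ∧
        Consistent (graphProfile E hirr) c ∧
        ∑ v, c v ≤ Fintype.card V + k) := by
  classical
  constructor
  · rintro ⟨Xs, hXk, hacyc⟩
    -- the cycle relation restricted outside `Xs`
    set r : V → V → Prop := fun u w => E u w ∧ u ∉ Xs ∧ w ∉ Xs with hr
    -- a rank function strictly decreasing along edges
    set ρ : V → ℕ := fun v => (Finset.univ.filter (fun w => Relation.TransGen r v w)).card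
      with hρdef
    have hρ : ∀ v u, r v u → ρ u < ρ v := by
      intro v u hvu
      apply Finset.card_lt_card
      rw [Finset.ssubset_iff_of_subset]
      · refine ⟨u, ?_, ?_⟩
        · simp only [Finset.mem_filter, Finset.mem_univ, true_and]
          exact Relation.TransGen.single hvu
        · simp only [Finset.mem_filter, Finset.mem_univ, true_and]
          exact hacyc u
      · intro w hw
        simp only [Finset.mem_filter, Finset.mem_univ, true_and] at hw ⊢
        exact Relation.TransGen.head hvu hw
    set keyρ : V → ℕ := fun v => if v ∈ Xs then 0 else ρ v + 1 with hkeydef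
    have hkey : ∀ v u, E v u → v ∉ Xs → keyρ u < keyρ v := by
      intro v u hE hv
      simp only [hkeydef, if_neg hv]
      by_cases hu : u ∈ Xs
      · rw [if_pos hu]; omega
      · rw [if_neg hu]
        have := hρ v u ⟨hE, hv, hu⟩
        omega
    -- the enumeration: sort by `keyρ`
    set σ0 : Fin (Fintype.card V) ≃ V := (Fintype.equivFin V).symm with hσ0
    set f : Fin (Fintype.card V) → ℕ := keyρ ∘ σ0 with hf
    set σ : Fin (Fintype.card V) ≃ V := (Tuple.sort f).trans σ0 with hσ
    have hmono : Monotone (keyρ ∘ σ) := by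
      have : keyρ ∘ σ = f ∘ Tuple.sort f := rfl
      rw [this]
      exact Tuple.monotone_sort f
    have hpos : ∀ u v : V, keyρ u < keyρ v → σ.symm u < σ.symm v := by
      intro u v h
      by_contra hle
      push_neg at hle
      have h2 := hmono hle
      simp only [Function.comp_apply, Equiv.apply_symm_apply] at h2
      omega
    set c : V → ℕ := fun v => if (outNbrs E v).Nonempty ∧ v ∈ Xs then 2 else 1 with hc
    refine ⟨c, ?_, ⟨σ, fun _ => true, ?_⟩, ?_⟩
    · -- certificate
      intro a
      constructor
      · simp only [hc]; split <;> omega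
      · by_cases h : (outNbrs E a).Nonempty ∧ a ∈ Xs
        · simp only [hc, if_pos h, gp_k_of_nonempty E hirr h.1, le_refl]
        · simp only [hc, if_neg h]
          exact (graphProfile E hirr a).k_pos
    · -- consistency
      intro a
      constructor
      · intro _; exact (gp_vote E hirr a).symm
      · intro hlt Y hY
        have h1 : 1 ≤ c a := by simp only [hc]; split <;> omega
        have hne : (outNbrs E a).Nonempty := gp_nonempty_of_lt E hirr h1 hlt
        have hk2 : (graphProfile E hirr a).k = 2 := gp_k_of_nonempty E hirr hne
        have haX : a ∉ Xs := by
          intro haX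
          have : c a = 2 := by
            simp only [hc]; rw [if_pos (⟨hne, haX⟩ : (outNbrs E a).Nonempty ∧ a ∈ Xs)]
          rw [this, hk2] at hlt; omega
        rw [gp_F_of_nonempty E hirr hne]
        simp only [decide_eq_true_eq]
        intro u hu
        have hE : E a u := by simpa [outNbrs] using hu
        exact hY u (hpos u a (hkey a u hE haX))
    · -- rank bound
      have hle : ∀ v : V, c v ≤ 1 + (if v ∈ Xs then 1 else 0) := by
        intro v; simp only [hc]
        by_cases h : (outNbrs E v).Nonempty ∧ v ∈ Xs
        · rw [if_pos h, if_pos h.2]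
        · rw [if_neg h]; split <;> omega
      calc ∑ v, c v ≤ ∑ v, (1 + if v ∈ Xs then 1 else 0) := Finset.sum_le_sum fun v _ => hle v
        _ = Fintype.card V + ∑ v, (if v ∈ Xs then 1 else 0) := by
            rw [Finset.sum_add_distrib, Finset.sum_const, smul_eq_mul, mul_one, Fintype.card]
        _ = Fintype.card V + Xs.card := by
            congr 1
            rw [Finset.sum_ite_mem, Finset.univ_inter, Finset.sum_const, smul_eq_mul, mul_one]
        _ ≤ Fintype.card V + k := by omega
  · rintro ⟨c, hcert, ⟨σ, X, hcons⟩, hrank⟩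
    -- the outcome is everywhere `true`
    have hXtrue : ∀ a, X a = true := by
      suffices H : ∀ n : ℕ, ∀ a : V, (σ.symm a : ℕ) < n → X a = true by
        exact fun a => H _ a (Nat.lt_succ_self _)
      intro n
      induction n with
      | zero => intro a h; omega
      | succ n ih =>
        intro a ha
        rcases eq_or_lt_of_le (hcert a).2 with heq | hlt
        · rw [(hcons a).1 heq, gp_vote]
        · have hne : (outNbrs E a).Nonempty := gp_nonempty_of_lt E hirr (hcert a).1 hlt
          have hF := (hcons a).2 hlt (fun _ => true) ?_
          · rw [← hF, gp_F_of_nonempty E hirr hne]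
            simp
          · intro b hb
            have hb' : (σ.symm b : ℕ) < n := by
              have := Fin.lt_def.mp hb
              omega
            exact (ih b hb').symm
    -- all out-neighbours of a delegating agent come earlier
    have horder : ∀ a u : V, c a < (graphProfile E hirr a).k → u ∈ outNbrs E a →
        σ.symm u < σ.symm a := by
      intro a u hlt hu
      by_contra hno
      push_neg at hno
      have hne : (outNbrs E a).Nonempty := gp_nonempty_of_lt E hirr (hcert a).1 hlt
      have hagree : ∀ b : V, σ.symm b < σ.symm a →
          (fun b => if b = u then false else true) b = X b := by
        intro b hb
        have hbu : b ≠ u := by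
          rintro rfl
          exact absurd hb (not_lt.mpr hno)
        simp only [if_neg hbu]
        exact (hXtrue b).symm
      have hF := (hcons a).2 hlt _ hagree
      rw [gp_F_of_nonempty E hirr hne, hXtrue a, decide_eq_true_eq] at hF
      have := hF u hu
      simp at this
    refine ⟨Finset.univ.filter (fun v => 2 ≤ c v), ?_, ?_⟩
    · -- cardinality bound
      have hle : ∀ v : V, 1 + (if 2 ≤ c v then 1 else 0) ≤ c v := by
        intro v
        have := (hcert v).1
        split <;> omega
      have hsum : Fintype.card V + (Finset.univ.filter (fun v => 2 ≤ c v)).card ≤ ∑ v, c v := by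
        calc Fintype.card V + (Finset.univ.filter (fun v => 2 ≤ c v)).card
            = ∑ v : V, (1 + if 2 ≤ c v then 1 else 0) := by
              rw [Finset.sum_add_distrib, Finset.sum_const, smul_eq_mul, mul_one, Fintype.card]
              congr 1
              rw [Finset.sum_ite, Finset.sum_const, Finset.sum_const]
              simp
          _ ≤ ∑ v, c v := Finset.sum_le_sum fun v _ => hle v
      omega
    · -- acyclicity
      intro v hTG
      have hstep : ∀ u w : V,
          (E u w ∧ u ∉ Finset.univ.filter (fun v => 2 ≤ c v) ∧
            w ∉ Finset.univ.filter (fun v => 2 ≤ c v)) →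
          (σ.symm w : ℕ) < (σ.symm u : ℕ) := by
        rintro u w ⟨hE, hu, -⟩
        have hw : w ∈ outNbrs E u := by simp [outNbrs, hE]
        have hk : (graphProfile E hirr u).k = 2 := gp_k_of_nonempty E hirr ⟨w, hw⟩
        have hcu : c u < 2 := by
          simp only [Finset.mem_filter, Finset.mem_univ, true_and, not_le] at hu
          exact hu
        have := horder u w (by rw [hk]; exact hcu) hw
        exact Fin.lt_def.mp this
      have htrans : Transitive (fun u w : V => (σ.symm w : ℕ) < (σ.symm u : ℕ)) := by
        intro a b d hab hbd
        omega
      have := Relation.TransGen.mono hstep v v hTG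
      rw [@Relation.transGen_eq_self _ (fun u w : V => (σ.symm w : ℕ) < (σ.symm u : ℕ)) ⟨fun _ _ _ h1 h2 => htrans h1 h2⟩] at this
      omega

end SmartVoting
end

section
/- Let B be a Liquid profile and M ≥ 1. There exists a consistent certificate c for B with c_a ≤ M for every agent a if and only if for every agent a there is a finite sequence of agents a = a_0, a_1, …, a_t such that k_{a_t} ≤ M (the last agent's backup direct vote occurs at a level at most M) and for each i < t there is a level h with h < k_{a_i}, h ≤ M, and d_{a_i}^h = a_{i+1}. -/
namespace LiquidVoting

/-- A Liquid ballot for agent `a`: levels `1, …, k-1` delegate to the pairwise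
distinct delegates `d h ∈ N \ {a}` ("copy the vote of `d h`"), and level `k` is
the backup direct vote. -/
structure LiquidBallot (N D : Type*) (a : N) where
  k : ℕ
  k_pos : 1 ≤ k
  d : ℕ → N
  vote : D
  no_self : ∀ h, 1 ≤ h → h < k → d h ≠ a
  distinct : ∀ h h', 1 ≤ h → h < k → 1 ≤ h' → h' < k → d h = d h' → h = h'

variable {N D : Type*} [Fintype N] [DecidableEq N]

/-- `c` is a certificate for the Liquid profile `B`. -/
def IsCert (B : ∀ a : N, LiquidBallot N D a) (c : N → ℕ) : Prop :=
  ∀ a, 1 ≤ c a ∧ c a ≤ (B a).k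

/-- `c` is consistent: there is an enumeration of the agents in which every agent
using a delegation (`c a < k_a`) is preceded by its chosen delegate. -/
def LConsistent (B : ∀ a : N, LiquidBallot N D a) (c : N → ℕ) : Prop :=
  ∃ σ : Fin (Fintype.card N) ≃ N,
    ∀ a, c a < (B a).k → σ.symm ((B a).d (c a)) < σ.symm a

/-- A Liquid profile has a consistent certificate using only the first `M`
preference levels iff from every agent there is a finite delegation path, using
only levels at most `M`, ending at an agent whose backup direct vote occurs at a
level at most `M`. -/
theorem bounded_consistent_iff_bounded_paths
    (B : ∀ a : N, LiquidBallot N D a) (M : ℕ) (hM : 1 ≤ M) :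
    (∃ c : N → ℕ, IsCert B c ∧ LConsistent B c ∧ ∀ a, c a ≤ M) ↔
      (∀ a : N, ∃ (t : ℕ) (seq : ℕ → N),
        seq 0 = a ∧ (B (seq t)).k ≤ M ∧
        ∀ i < t, ∃ h : ℕ, 1 ≤ h ∧ h < (B (seq i)).k ∧ h ≤ M ∧
          (B (seq i)).d h = seq (i + 1)) := by
  classical
  constructor
  · rintro ⟨c, hcert, ⟨σ, hσ⟩, hbound⟩
    have key : ∀ n : ℕ, ∀ a : N, (σ.symm a : ℕ) < n →
        ∃ (t : ℕ) (seq : ℕ → N),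
          seq 0 = a ∧ (B (seq t)).k ≤ M ∧
          ∀ i < t, ∃ h : ℕ, 1 ≤ h ∧ h < (B (seq i)).k ∧ h ≤ M ∧
            (B (seq i)).d h = seq (i + 1) := by
      intro n
      induction n with
      | zero => intro a ha; omega
      | succ n ih =>
        intro a ha
        by_cases hc : c a < (B a).k
        · have hlt := hσ a hc
          have hlt' : ((σ.symm ((B a).d (c a))) : ℕ) < (σ.symm a : ℕ) := hlt
          obtain ⟨t, seq, h0, hk, hstep⟩ := ih ((B a).d (c a)) (by omega)
          refine ⟨t + 1, fun i => Nat.casesOn i a fun j => seq j, rfl, hk, ?_⟩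
          intro i hi
          cases i with
          | zero =>
            exact ⟨c a, (hcert a).1, hc, hbound a, h0.symm⟩
          | succ j => exact hstep j (by omega)
        · push_neg at hc
          have hca : c a = (B a).k := le_antisymm (hcert a).2 hc
          exact ⟨0, fun _ => a, rfl, by rw [← hca]; exact hbound a,
            fun i hi => by omega⟩
    intro a
    exact key (Fintype.card N) a (σ.symm a).isLt
  · intro hpaths
    have hex : ∀ a : N, ∃ t : ℕ, ∃ seq : ℕ → N,
        seq 0 = a ∧ (B (seq t)).k ≤ M ∧
        ∀ i < t, ∃ h : ℕ, 1 ≤ h ∧ h < (B (seq i)).k ∧ h ≤ M ∧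
          (B (seq i)).d h = seq (i + 1) := hpaths
    set f : N → ℕ := fun a => Nat.find (hex a) with hf
    have hchoice : ∀ a : N, ∃ ca : ℕ, (1 ≤ ca ∧ ca ≤ (B a).k) ∧ ca ≤ M ∧
        (ca < (B a).k → f ((B a).d ca) < f a) := by
      intro a
      obtain ⟨seq, h0, hk, hstep⟩ := Nat.find_spec (hex a)
      rcases hfa : f a with _ | t
      · simp only [hf] at hfa; rw [hfa, h0] at hk
        exact ⟨(B a).k, ⟨(B a).k_pos, le_rfl⟩, hk, fun h => absurd h (lt_irrefl _)⟩
      · simp only [hf] at hfa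
        rw [hfa] at hk hstep
        obtain ⟨h, h1, h2, h3, h4⟩ := hstep 0 (Nat.succ_pos t)
        rw [h0] at h2 h4
        have hP : ∃ seq' : ℕ → N, seq' 0 = seq 1 ∧ (B (seq' t)).k ≤ M ∧
            ∀ i < t, ∃ h : ℕ, 1 ≤ h ∧ h < (B (seq' i)).k ∧ h ≤ M ∧
              (B (seq' i)).d h = seq' (i + 1) :=
          ⟨fun j => seq (j + 1), rfl, hk, fun i hi => hstep (i + 1) (by omega)⟩
        have hle : Nat.find (hex (seq 1)) ≤ t := Nat.find_le hP
        refine ⟨h, ⟨h1, le_of_lt h2⟩, h3, fun _ => ?_⟩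
        rw [h4]
        simp only [hf]
        omega
    choose c hc using hchoice
    set n := Fintype.card N
    set e : N ≃ Fin n := Fintype.equivFin N with he
    set u : Fin n → ℕ := f ∘ e.symm with hu
    set π := Tuple.sort u with hπ
    set σ : Fin n ≃ N := π.trans e.symm with hσdef
    have hmono := Tuple.monotone_sort u
    have hkey : ∀ a b : N, f b < f a → σ.symm b < σ.symm a := by
      intro a b hfb
      by_contra hle
      push_neg at hle
      have h2 := hmono hle
      simp only [hσdef, Equiv.symm_trans_apply, Equiv.symm_symm,
        Function.comp_apply, Equiv.apply_symm_apply, hπ, hu, Equiv.symm_apply_apply] at h2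
      omega
    refine ⟨c, fun a => (hc a).1, ⟨σ, ?_⟩, fun a => (hc a).2.1⟩
    intro a ha
    exact hkey a ((B a).d (c a)) ((hc a).2.2 ha)

end LiquidVoting
end

section
/- For every valid smart profile B on n agents, the greedy unravelling Unravel(U) terminates within n steps: whenever a partial assignment X is not total, the level ℓ(X) is well-defined (some undetermined agent is resolvable at some level, since the last level of every ballot is a direct vote), and iterating X^{t+1} = step(X^t) from the everywhere-undefined assignment X^0 yields a total assignment X^n ∈ D^N after at most n iterations. -/
namespace SmartVoting

variable {N D : Type*} [Fintype N] [DecidableEq N]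

/-- `v` is the necessary winner of agent `a`'s level-`h` delegation at the partial
assignment `X`: every total assignment extending `X` makes the delegation function
evaluate to `v`. -/
def NecWinner (B : ∀ a : N, SmartBallot N D a) (a : N) (h : ℕ)
    (X : N → Option D) (v : D) : Prop :=
  ∀ Y : N → D, (∀ b w, X b = some w → Y b = w) → (B a).F h Y = v

/-- Agent `a` is resolvable at level `h` given the partial assignment `X`:
`a` is still undetermined, and level `h` of its ballot is either its direct vote
(`h = k_a`) or a delegation with a necessary winner at `X`. -/
def ResolvableAt (B : ∀ a : N, SmartBallot N D a) (X : N → Option D)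
    (a : N) (h : ℕ) : Prop :=
  X a = none ∧ 1 ≤ h ∧ h ≤ (B a).k ∧
    (h = (B a).k ∨ ∃ v, NecWinner B a h X v)

/-- The least level at which some agent is resolvable given `X`. -/
noncomputable def lev (B : ∀ a : N, SmartBallot N D a) (X : N → Option D) : ℕ :=
  sInf {h | ∃ a, ResolvableAt B X a h}

open scoped Classical in
/-- One step of the greedy procedure `Unravel(U)`: every agent resolvable at the
least resolvable level `lev B X` gets its direct vote or necessary winner. -/
noncomputable def stepU (B : ∀ a : N, SmartBallot N D a) (X : N → Option D) :
    N → Option D := fun a =>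
  if ResolvableAt B X a (lev B X) then
    (if lev B X = (B a).k then some (B a).vote
     else if hw : ∃ v, NecWinner B a (lev B X) X v then some hw.choose else X a)
  else X a

/-! Every undetermined agent is resolvable at its last level, the direct vote, so the least
resolvable level exists and `stepU` determines at least one new agent while never changing a
determined one. The set of determined agents thus grows strictly until it is all of `N`, which
takes at most `|N|` steps. -/

section Iterate

variable {α β : Type*} [Fintype α]

def determined (X : α → Option β) : Finset α :=
  {a | (X a).isSome}

theorem mem_determined {X : α → Option β} {a : α} :
    a ∈ determined X ↔ X a ≠ none := by
  simp [determined, Option.isSome_iff_ne_none]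

theorem card_determined_iterate_ge (f : (α → Option β) → α → Option β)
    (determined_mono : ∀ X a, X a ≠ none → f X a ≠ none)
    (progress : ∀ X, (∃ a, X a = none) → ∃ a, X a = none ∧ f X a ≠ none)
    (X : α → Option β) (t : ℕ) :
    min t (Fintype.card α) ≤ (determined (f^[t] X)).card := by
  induction t with
  | zero => simp
  | succ t ih =>
    rw [Function.iterate_succ_apply']
    set Y := f^[t] X
    have hsub : determined Y ⊆ determined (f Y) := fun a ha =>
      mem_determined.2 (determined_mono Y a (mem_determined.1 ha))
    by_cases htotal : ∃ a, Y a = none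
    · obtain ⟨a, hYa, hfYa⟩ := progress Y htotal
      have hssub : determined Y ⊂ determined (f Y) :=
        (Finset.ssubset_iff_of_subset hsub).2
          ⟨a, mem_determined.2 hfYa, fun ha => mem_determined.1 ha hYa⟩
      have := Finset.card_lt_card hssub
      omega
    · push Not at htotal
      have hY : determined Y = Finset.univ :=
        Finset.eq_univ_of_forall fun a => mem_determined.2 (htotal a)
      have := Finset.card_le_card hsub
      rw [hY, Finset.card_univ] at this
      omega

theorem iterate_card_ne_none (f : (α → Option β) → α → Option β)
    (determined_mono : ∀ X a, X a ≠ none → f X a ≠ none)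
    (progress : ∀ X, (∃ a, X a = none) → ∃ a, X a = none ∧ f X a ≠ none)
    (X : α → Option β) (a : α) : f^[Fintype.card α] X a ≠ none := by
  have hcard := card_determined_iterate_ge f determined_mono progress X (Fintype.card α)
  rw [min_self] at hcard
  have huniv := Finset.eq_univ_of_card _ (le_antisymm (Finset.card_le_univ _) hcard)
  exact mem_determined.1 (huniv ▸ Finset.mem_univ a)

end Iterate

omit [Fintype N] [DecidableEq N] in
theorem resolvableAt_k (B : ∀ a : N, SmartBallot N D a) {X : N → Option D} {a : N}
    (ha : X a = none) : ResolvableAt B X a (B a).k :=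
  ⟨ha, (B a).k_pos, le_rfl, Or.inl rfl⟩

omit [Fintype N] [DecidableEq N] in
theorem exists_resolvableAt_lev (B : ∀ a : N, SmartBallot N D a) {X : N → Option D}
    (h : ∃ a, X a = none) : ∃ a, ResolvableAt B X a (lev B X) :=
  let ⟨a, ha⟩ := h
  Nat.sInf_mem (s := {h | ∃ a, ResolvableAt B X a h}) ⟨(B a).k, a, resolvableAt_k B ha⟩

omit [Fintype N] [DecidableEq N] in
theorem stepU_apply_of_ne_none (B : ∀ a : N, SmartBallot N D a) {X : N → Option D} {a : N}
    (ha : X a ≠ none) : stepU B X a = X a :=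
  if_neg fun hres => ha hres.1

omit [Fintype N] [DecidableEq N] in
theorem stepU_apply_ne_none_of_resolvableAt_lev (B : ∀ a : N, SmartBallot N D a)
    {X : N → Option D} {a : N} (hres : ResolvableAt B X a (lev B X)) : stepU B X a ≠ none := by
  unfold stepU
  rw [if_pos hres]
  split_ifs with hk hwin
  · exact Option.some_ne_none _
  · exact Option.some_ne_none _
  · exact absurd (hres.2.2.2.resolve_left hk) hwin

/-- `Unravel(U)` terminates within `n` steps on every valid smart profile:
whenever `X` is not total some agent is resolvable at some level (so the level
`lev B X` is well-defined), and iterating `stepU` from the everywhere-undefined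
assignment yields a total assignment after at most `n = |N|` iterations. -/
theorem unravelU_terminates (B : ∀ a : N, SmartBallot N D a) :
    (∀ X : N → Option D, (∃ a, X a = none) → ∃ a h, ResolvableAt B X a h) ∧
    (∀ a : N, ((stepU B)^[Fintype.card N] (fun _ => none)) a ≠ none) := by
  refine ⟨fun X ⟨a, ha⟩ => ⟨a, _, resolvableAt_k B ha⟩, iterate_card_ne_none _ ?_ ?_ _⟩
  · intro X a ha
    rwa [stepU_apply_of_ne_none B ha]
  · intro X hX
    obtain ⟨a, hres⟩ := exists_resolvableAt_lev B hX
    exact ⟨a, hres.1, stepU_apply_ne_none_of_resolvableAt_lev B hres⟩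

end SmartVoting
end

section
/- Let B be a Liquid[1] profile. A consistent certificate c for B has minimal rank among all consistent certificates of B if and only if the set {a : c_a = 2} consists of exactly one agent from each delegation cycle of B and contains no other agents. -/
namespace LiquidVoting

variable {N D : Type*} [Fintype N] [DecidableEq N]

/-- The rank of a certificate: the sum of the used preference levels. -/
def rank (c : N → ℕ) : ℕ := ∑ a, c a

/-- The total delegation map of a Liquid[1] profile: a delegating agent (one with
`k = 2`) maps to its delegate, a direct voter maps to itself. -/
def dmap (B : ∀ a : N, LiquidBallot N D a) : N → N :=
  fun a => if 2 ≤ (B a).k then (B a).d 1 else a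

/-- Agent `a` lies on a delegation cycle: `a` is delegating and iterating the
delegation map from `a` returns to `a`. -/
def OnCycle (B : ∀ a : N, LiquidBallot N D a) (a : N) : Prop :=
  (B a).k = 2 ∧ ∃ m : ℕ, 1 ≤ m ∧ (dmap B)^[m] a = a

/-- Agents `a` and `b` lie on the same delegation cycle. -/
def SameCycle (B : ∀ a : N, LiquidBallot N D a) (a b : N) : Prop :=
  OnCycle B a ∧ OnCycle B b ∧ ∃ m : ℕ, (dmap B)^[m] a = b

/-! ### Auxiliary machinery -/

/-- Every delegation cycle contains an agent using its backup vote. -/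
def Hits (B : ∀ a : N, LiquidBallot N D a) (c : N → ℕ) : Prop :=
  ∀ a, OnCycle B a → ∃ b, SameCycle B a b ∧ c b = 2

/-- One step of the *active* delegation graph. -/
def stepf (B : ∀ a : N, LiquidBallot N D a) (c : N → ℕ) : N → N :=
  fun x => if c x < (B x).k then dmap B x else x

variable {B : ∀ a : N, LiquidBallot N D a} {c : N → ℕ}

lemma dmap_of_two {a : N} (h : (B a).k = 2) : dmap B a = (B a).d 1 := by
  simp [dmap, h]

lemma d_cert {a : N} (h1 : c a = 1) (h2 : (B a).k = 2) :
    (B a).d (c a) = dmap B a := by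
  rw [h1, dmap_of_two h2]

lemma cert_active (hL1 : ∀ a, (B a).k ≤ 2) (hc : IsCert B c) {a : N}
    (h : c a < (B a).k) : c a = 1 ∧ (B a).k = 2 := by
  have h1 := hc a
  have h2 := hL1 a
  omega

lemma iterate_period {a : N} {m : ℕ} (h : (dmap B)^[m] a = a) (t : ℕ) :
    (dmap B)^[m * t] a = a := by
  induction t with
  | zero => simp
  | succ t ih => rw [Nat.mul_succ, Function.iterate_add_apply, h, ih]

lemma exists_back {a : N} (h : OnCycle B a) (i : ℕ) :
    ∃ j, 1 ≤ j ∧ (dmap B)^[j] ((dmap B)^[i] a) = a := by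
  obtain ⟨hk, m, hm, hma⟩ := h
  have hle : i + 1 ≤ m * (i + 1) := Nat.le_mul_of_pos_left _ hm
  refine ⟨m * (i + 1) - i, by omega, ?_⟩
  rw [← Function.iterate_add_apply]
  have heq : m * (i + 1) - i + i = m * (i + 1) := by omega
  rw [heq]
  exact iterate_period hma _

lemma onCycle_iterate (hL1 : ∀ a, (B a).k ≤ 2) {a : N} (h : OnCycle B a) (i : ℕ) :
    OnCycle B ((dmap B)^[i] a) := by
  obtain ⟨j, hj, hja⟩ := exists_back h i
  set b := (dmap B)^[i] a with hb
  have hk : (B b).k = 2 := by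
    by_contra hkb
    have hfix : dmap B b = b := by
      have h2 := hL1 b
      simp only [dmap, if_neg (by omega : ¬ 2 ≤ (B b).k)]
    have hfixj : (dmap B)^[j] b = b := Function.iterate_fixed hfix j
    rw [hfixj] at hja
    exact hkb (hja ▸ h.1)
  refine ⟨hk, i + j, by omega, ?_⟩
  rw [Function.iterate_add_apply, hja]

lemma sameCycle_refl {a : N} (h : OnCycle B a) : SameCycle B a a :=
  ⟨h, h, 0, rfl⟩

lemma sameCycle_symm {a b : N} (h : SameCycle B a b) : SameCycle B b a := by
  obtain ⟨ha, hb, i, hi⟩ := h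
  obtain ⟨j, _, hja⟩ := exists_back ha i
  exact ⟨hb, ha, j, hi ▸ hja⟩

lemma sameCycle_trans {a b e : N} (h1 : SameCycle B a b) (h2 : SameCycle B b e) :
    SameCycle B a e := by
  obtain ⟨ha, hb, i, hi⟩ := h1
  obtain ⟨_, he, j, hj⟩ := h2
  exact ⟨ha, he, j + i, by rw [Function.iterate_add_apply, hi, hj]⟩

/-- Termination of active delegation chains, given that every cycle is hit. -/
lemma exists_inactive (hL1 : ∀ a, (B a).k ≤ 2) (hc : IsCert B c) (hH : Hits B c)
    (a : N) : ∃ m, ¬ (c ((stepf B c)^[m] a) < (B ((stepf B c)^[m] a)).k) := by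
  by_contra hcon
  push_neg at hcon
  have hsd : ∀ m, (stepf B c)^[m] a = (dmap B)^[m] a := by
    intro m
    induction m with
    | zero => rfl
    | succ m ih =>
      rw [Function.iterate_succ_apply', Function.iterate_succ_apply', ← ih,
        stepf, if_pos (hcon m)]
  have hact : ∀ m, c ((dmap B)^[m] a) = 1 ∧ (B ((dmap B)^[m] a)).k = 2 := by
    intro m
    exact cert_active hL1 hc (by rw [← hsd m]; exact hcon m)
  obtain ⟨x, y, hxy, hfxy⟩ :=
    Finite.exists_ne_map_eq_of_infinite (fun m : ℕ => (dmap B)^[m] a)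
  wlog hlt : x < y generalizing x y
  · exact this y x hxy.symm hfxy.symm (by omega)
  set a' := (dmap B)^[x] a with ha'
  have hper : (dmap B)^[y - x] a' = a' := by
    rw [ha', ← Function.iterate_add_apply]
    have : y - x + x = y := by omega
    rw [this]
    exact hfxy.symm
  have hoc : OnCycle B a' := ⟨(hact x).2, y - x, by omega, hper⟩
  obtain ⟨b, hsb, hb2⟩ := hH a' hoc
  obtain ⟨_, _, m, hm⟩ := hsb
  have : b = (dmap B)^[m + x] a := by
    rw [Function.iterate_add_apply, ← ha', hm]
  rw [this] at hb2
  have := (hact (m + x)).1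
  omega

/-- Sorting by a height function yields a consistent enumeration. -/
lemma sort_consistent (ρ : N → ℕ) (e : Fin (Fintype.card N) ≃ N)
    (h : ∀ a, c a < (B a).k → ρ ((B a).d (c a)) < ρ a) : LConsistent B c := by
  refine ⟨(Tuple.sort (ρ ∘ e)).trans e, fun a ha => ?_⟩
  by_contra hle
  push_neg at hle
  have hmono := Tuple.monotone_sort (ρ ∘ e) hle
  simp only [Function.comp_apply] at hmono
  have hx : ∀ z : N,
      e ((Tuple.sort (ρ ∘ ⇑e)) (((Tuple.sort (ρ ∘ ⇑e)).trans e).symm z)) = z :=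
    fun z => ((Tuple.sort (ρ ∘ e)).trans e).apply_symm_apply z
  rw [hx, hx] at hmono
  have := h a ha
  omega

/-- A certificate hitting every cycle is consistent. -/
lemma consistent_of_hits (hL1 : ∀ a, (B a).k ≤ 2) (hc : IsCert B c)
    (hH : Hits B c) : LConsistent B c := by
  classical
  have hterm := exists_inactive hL1 hc hH
  set ρ : N → ℕ := fun a => Nat.find (hterm a) with hρdef
  have hρ : ∀ a, c a < (B a).k → ρ (dmap B a) < ρ a := by
    intro a ha
    have hne : ρ a ≠ 0 := by
      intro h0
      have hs := Nat.find_spec (hterm a)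
      rw [show Nat.find (hterm a) = 0 from h0] at hs
      exact hs ha
    obtain ⟨t, ht⟩ := Nat.exists_eq_succ_of_ne_zero hne
    have hstep : stepf B c a = dmap B a := if_pos ha
    have hspec : ¬ (c ((stepf B c)^[t] (dmap B a)) <
        (B ((stepf B c)^[t] (dmap B a))).k) := by
      have hs := Nat.find_spec (hterm a)
      rw [show Nat.find (hterm a) = t + 1 from ht] at hs
      rwa [Function.iterate_succ_apply, hstep] at hs
    have hfind : Nat.find (hterm (dmap B a)) ≤ t := by
      apply Nat.find_min'
      -- need the predicate at t for dmap B a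
      exact hspec
    have : ρ (dmap B a) ≤ t := hfind
    omega
  exact sort_consistent ρ (Fintype.equivFin N).symm fun a ha => by
    obtain ⟨h1, h2⟩ := cert_active hL1 hc ha
    rw [d_cert h1 h2]
    exact hρ a ha

/-- A consistent certificate hits every cycle. -/
lemma hits_of_consistent (hL1 : ∀ a, (B a).k ≤ 2) (hc : IsCert B c)
    (hcons : LConsistent B c) : Hits B c := by
  intro a ha
  by_contra hB
  push_neg at hB
  obtain ⟨σ, hσ⟩ := hcons
  have hact : ∀ i, σ.symm (dmap B ((dmap B)^[i] a)) < σ.symm ((dmap B)^[i] a) := by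
    intro i
    set b := (dmap B)^[i] a with hb
    have hob : OnCycle B b := onCycle_iterate hL1 ha i
    have hsc : SameCycle B a b := ⟨ha, hob, i, rfl⟩
    have hcb : c b ≠ 2 := hB b hsc
    have h1 : c b = 1 := by have := hc b; have := hob.1; omega
    have hlt : c b < (B b).k := by rw [h1, hob.1]; omega
    have := hσ b hlt
    rwa [d_cert h1 hob.1] at this
  have hdec : ∀ i, σ.symm ((dmap B)^[i + 1] a) < σ.symm a := by
    intro i
    induction i with
    | zero => simpa using hact 0
    | succ i ih =>
      rw [Function.iterate_succ_apply']
      exact lt_trans (hact (i + 1)) ih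
  obtain ⟨hk, m, hm, hma⟩ := ha
  obtain ⟨t, ht⟩ := Nat.exists_eq_succ_of_ne_zero (by omega : m ≠ 0)
  have := hdec t
  rw [show t + 1 = m from by omega, hma] at this
  exact lt_irrefl _ this

lemma rank_eq (hL1 : ∀ a, (B a).k ≤ 2) (hc : IsCert B c) :
    rank c = Fintype.card N + (Finset.univ.filter fun a => c a = 2).card := by
  classical
  unfold rank
  rw [Finset.card_filter]
  rw [← Finset.card_univ, Finset.card_eq_sum_ones, ← Finset.sum_add_distrib]
  apply Finset.sum_congr rfl
  intro a _
  have h1 := hc a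
  have h2 := hL1 a
  by_cases h : c a = 2 <;> simp [h] <;> omega

lemma rank_update_lt {b : N} (hb : c b = 2) :
    rank (Function.update c b 1) < rank c := by
  classical
  unfold rank
  have h1 : ∑ x, Function.update c b 1 x = 1 + ∑ x ∈ Finset.univ.erase b, c x := by
    rw [Finset.sum_update_of_mem (Finset.mem_univ b)]
    congr 1
    apply Finset.sum_congr _ (fun _ _ => rfl)
    simp [Finset.sdiff_singleton_eq_erase]
  have h2 : ∑ x, c x = 2 + ∑ x ∈ Finset.univ.erase b, c x := by
    rw [← Finset.add_sum_erase _ _ (Finset.mem_univ b), hb]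
  omega

lemma cert_update (hc : IsCert B c) (b : N) : IsCert B (Function.update c b 1) := by
  intro a
  by_cases h : a = b
  · subst h
    simp [Function.update_self, (B a).k_pos]
  · rw [Function.update_of_ne h]
    exact hc a

variable (B)

theorem minimal_rank_iff_one_per_cycle'
    (hL1 : ∀ a, (B a).k ≤ 2)
    (hc : IsCert B c) (hcons : LConsistent B c) :
    (∀ c', IsCert B c' → LConsistent B c' → rank c ≤ rank c') ↔
      ((∀ a, c a = 2 → OnCycle B a) ∧
        ∀ a, OnCycle B a → ∃! b, SameCycle B a b ∧ c b = 2) := by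
  classical
  have hH : Hits B c := hits_of_consistent hL1 hc hcons
  constructor
  · intro hmin
    constructor
    · intro a0 ha0
      by_contra hnc
      set c' := Function.update c a0 1 with hc'def
      have hcert' : IsCert B c' := cert_update hc a0
      have hH' : Hits B c' := by
        intro a ha
        obtain ⟨b, hsb, hb2⟩ := hH a ha
        have hba : b ≠ a0 := fun h => hnc (h ▸ hsb.2.1)
        exact ⟨b, hsb, by rw [hc'def, Function.update_of_ne hba]; exact hb2⟩
      have h1 := hmin c' hcert' (consistent_of_hits hL1 hcert' hH')
      have h2 := rank_update_lt ha0
      rw [← hc'def] at h2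
      omega
    · intro a ha
      obtain ⟨b, hsb, hb2⟩ := hH a ha
      refine ⟨b, ⟨hsb, hb2⟩, ?_⟩
      rintro b' ⟨hsb', hb2'⟩
      by_contra hne
      set c' := Function.update c b' 1 with hc'def
      have hcert' : IsCert B c' := cert_update hc b'
      have hH' : Hits B c' := by
        intro x hx
        obtain ⟨y, hsy, hy2⟩ := hH x hx
        by_cases hy : y = b'
        · refine ⟨b, ?_, ?_⟩
          · exact sameCycle_trans (hy ▸ hsy)
              (sameCycle_trans (sameCycle_symm hsb') hsb)
          · rw [hc'def, Function.update_of_ne (fun h => hne h.symm)]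
            exact hb2
        · exact ⟨y, hsy, by rw [hc'def, Function.update_of_ne hy]; exact hy2⟩
      have h1 := hmin c' hcert' (consistent_of_hits hL1 hcert' hH')
      have h2 := rank_update_lt hb2'
      rw [← hc'def] at h2
      omega
  · rintro ⟨h1, h2⟩ c' hcert' hcons'
    have hH' : Hits B c' := hits_of_consistent hL1 hcert' hcons'
    rw [rank_eq hL1 hc, rank_eq hL1 hcert']
    have hcard : (Finset.univ.filter fun a => c a = 2).card ≤
        (Finset.univ.filter fun a => c' a = 2).card := by
      choose f hf1 hf2 using hH'
      set g : N → N := fun a => if h : OnCycle B a then f a h else a with hg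
      apply Finset.card_le_card_of_injOn g
      · intro a haf
        rw [Finset.mem_coe, Finset.mem_filter] at haf ⊢
        have hoc : OnCycle B a := h1 a haf.2
        refine ⟨Finset.mem_univ _, ?_⟩
        rw [hg]
        simp only [dif_pos hoc]
        exact hf2 a hoc
      · intro a1 ha1 a2 ha2 hgeq
        rw [Finset.coe_filter, Set.mem_setOf_eq] at ha1 ha2
        have hoc1 : OnCycle B a1 := h1 a1 ha1.2
        have hoc2 : OnCycle B a2 := h1 a2 ha2.2
        rw [hg] at hgeq
        simp only [dif_pos hoc1, dif_pos hoc2] at hgeq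
        have hs1 : SameCycle B a1 (f a1 hoc1) := hf1 a1 hoc1
        have hs2 : SameCycle B a2 (f a2 hoc2) := hf1 a2 hoc2
        have hs12 : SameCycle B a1 a2 :=
          sameCycle_trans hs1 (hgeq ▸ sameCycle_symm hs2)
        obtain ⟨w, _, hu⟩ := h2 a1 hoc1
        have e1 : a1 = w := hu a1 ⟨sameCycle_refl hoc1, ha1.2⟩
        have e2 : a2 = w := hu a2 ⟨hs12, ha2.2⟩
        rw [e1, e2]
    omega


/-- For a Liquid[1] profile, a consistent certificate has minimal rank among all
consistent certificates iff the set of agents receiving their second preference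
consists of exactly one agent from each delegation cycle and no other agents. -/
theorem minimal_rank_iff_one_per_cycle
    (B : ∀ a : N, LiquidBallot N D a) (hL1 : ∀ a, (B a).k ≤ 2)
    (c : N → ℕ) (hc : IsCert B c) (hcons : LConsistent B c) :
    (∀ c', IsCert B c' → LConsistent B c' → rank c ≤ rank c') ↔
      ((∀ a, c a = 2 → OnCycle B a) ∧
        ∀ a, OnCycle B a → ∃! b, SameCycle B a b ∧ c b = 2) :=
  minimal_rank_iff_one_per_cycle' B hL1 hc hcons

end LiquidVoting
end

section
/- Let B be a Liquid profile on n agents containing a delegation cycle at the first preference level: there exist t ≥ 1 and agents a_0, a_1, …, a_t with a_t = a_0, each having k_{a_i} ≥ 2 and d_{a_i}^1 = a_{i+1} for all i < t. Then the all-ones certificate (c_a = 1 for all a) is not consistent for B, and consequently every consistent certificate c of B satisfies rank(c) ≥ n + 1. -/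
namespace LiquidVoting

variable {N D : Type*} [Fintype N] [DecidableEq N]

/-- If a Liquid profile contains a delegation cycle at the first preference level,
then the all-ones certificate is not consistent, and consequently every consistent
certificate has rank at least `n + 1`. -/
theorem first_level_cycle_rank_bound
    (B : ∀ a : N, LiquidBallot N D a)
    (hcyc : ∃ (t : ℕ) (seq : ℕ → N), 1 ≤ t ∧ seq t = seq 0 ∧
      ∀ i < t, 2 ≤ (B (seq i)).k ∧ (B (seq i)).d 1 = seq (i + 1)) :
    ¬ LConsistent B (fun _ => 1) ∧
      ∀ c : N → ℕ, IsCert B c → LConsistent B c →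
        Fintype.card N + 1 ≤ ∑ a, c a := by
  obtain ⟨t, seq, ht, hts, hstep⟩ := hcyc
  have notcons : ¬ LConsistent B (fun _ => 1) := by
    rintro ⟨σ, hσ⟩
    have key : ∀ i ≤ t, 1 ≤ i → σ.symm (seq i) < σ.symm (seq 0) := by
      intro i hi hi1
      induction i with
      | zero => omega
      | succ j ih =>
        have hj : j < t := hi
        obtain ⟨hk, hd⟩ := hstep j hj
        have := hσ (seq j) (by show 1 < _; omega)
        rw [hd] at this
        rcases Nat.eq_zero_or_pos j with hj0 | hj0
        · subst hj0; exact this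
        · exact lt_trans this (ih (le_of_lt hj) hj0)
    have := key t le_rfl ht
    rw [hts] at this
    exact lt_irrefl _ this
  refine ⟨notcons, fun c hcert hcons => ?_⟩
  by_contra h
  push_neg at h
  have hle : ∀ a ∈ Finset.univ, 1 ≤ c a := fun a _ => (hcert a).1
  have hsum : (Finset.univ.sum fun _ : N => 1) = ∑ a, c a := by
    have h1 : Fintype.card N ≤ ∑ a, c a := by
      calc Fintype.card N = ∑ _a : N, 1 := by simp
        _ ≤ ∑ a, c a := Finset.sum_le_sum hle
    have : ∑ a, c a = Fintype.card N := by omega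
    simp [this]
  have hall : ∀ a ∈ Finset.univ, c a = 1 :=
    fun a ha => ((Finset.sum_eq_sum_iff_of_le hle).mp hsum a ha).symm
  have : c = fun _ => 1 := funext fun a => hall a (Finset.mem_univ a)
  exact notcons (this ▸ hcons)

end LiquidVoting
end
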